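/- There exists an algebra (a set with a single binary operation) that is right nilpotent but not left nilpotent with respect to the binary term condition commutator: namely, the algebra A = G ∪ {o} (G infinite, o ∉ G) with t(x,y) = o if x = o and t(x,y) = s(x,y) otherwise for a fixed injection s : A² → G, satisfies [[1,1],1] = 0, but [1]'_n ≠ 0 for all n, where [1]'_0 = 1 and [1]'_{n+1} = [1, [1]'_n]. -/
import Mathlib


/-- The carrier `A = G ∪ {o}` with `G` infinite: `G` is the set of formal
products, so `AA.g : A² → G` is a fixed injection `s`. -/
inductive AA : Type where
  | o : AA
  | g (x y : AA) : AA

/-- The binary operation: `t(o, y) = o` and `t(x, y) = s(x, y)` for `x ≠ o`. -/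
def tA : AA → AA → AA
  | .o, _ => .o
  | x, y => .g x y

/-- A congruence of `⟨A; t⟩`. -/
def IsConA (θ : AA → AA → Prop) : Prop :=
  Equivalence θ ∧ ∀ a b c d : AA, θ a b → θ c d → θ (tA a c) (tA b d)

/-- `M(α,β)`: the subalgebra of `A⁴` generated by
`{(x,x;y,y) : (x,y) ∈ α} ∪ {(c,d;c,d) : (c,d) ∈ β}`. -/
inductive MsqA (α β : AA → AA → Prop) : AA × AA × AA × AA → Prop where
  | genA (x y : AA) : α x y → MsqA α β (x, x, y, y)
  | genB (c d : AA) : β c d → MsqA α β (c, d, c, d)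
  | app (a₁ a₂ a₃ a₄ b₁ b₂ b₃ b₄ : AA) :
      MsqA α β (a₁, a₂, a₃, a₄) → MsqA α β (b₁, b₂, b₃, b₄) →
      MsqA α β (tA a₁ b₁, tA a₂ b₂, tA a₃ b₃, tA a₄ b₄)

/-- The centrality condition `C(α,β;δ)`. -/
def CenA (α β δ : AA → AA → Prop) : Prop :=
  ∀ h₁ h₂ h₃ h₄ : AA, MsqA α β (h₁, h₂, h₃, h₄) → δ h₁ h₂ → δ h₃ h₄

/-- The binary term condition commutator `[α,β]`: the least congruence `δ`
with `C(α,β;δ)`. -/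
def commA (α β : AA → AA → Prop) : AA → AA → Prop :=
  fun a b => ∀ δ : AA → AA → Prop, IsConA δ → CenA α β δ → δ a b

/-- The total congruence `1`. -/
def oneA : AA → AA → Prop := fun _ _ => True

/-- The left lower central series `[1]'₀ = 1`, `[1]'_{n+1} = [1, [1]'ₙ]`. -/
def lserA : ℕ → AA → AA → Prop
  | 0 => oneA
  | n + 1 => commA oneA (lserA n)

/-- The congruence with classes `G` and `{o}`. -/
def del0 : AA → AA → Prop := fun a b => (a = .o ↔ b = .o)

lemma tA_eq_o_iff (x y : AA) : tA x y = .o ↔ x = .o := by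
  cases x <;> simp [tA]

lemma tA_g (x y z : AA) : tA (.g x y) z = .g (.g x y) z := rfl

lemma isConA_del0 : IsConA del0 := by
  refine ⟨⟨fun _ => Iff.rfl, fun h => h.symm, fun h h' => h.trans h'⟩, ?_⟩
  intro a b c d hab _
  simp only [del0, tA_eq_o_iff]
  exact hab

lemma cen11 : CenA oneA oneA del0 := by
  have key : ∀ h, MsqA oneA oneA h → (del0 h.1 h.2.1 ↔ del0 h.2.2.1 h.2.2.2) := by
    intro h hm
    induction hm with
    | genA x y _ => simp [del0]
    | genB c d _ => exact Iff.rfl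
    | app a₁ a₂ a₃ a₄ b₁ b₂ b₃ b₄ _ _ iha ihb =>
        simpa only [del0, tA_eq_o_iff] using iha
  intro h₁ h₂ h₃ h₄ hm hd
  exact (key _ hm).mp hd

lemma cenEq : CenA (commA oneA oneA) oneA Eq := by
  have key : ∀ h, MsqA (commA oneA oneA) oneA h →
      (h.1 = h.2.1 → h.2.2.1 = h.2.2.2) ∧ del0 h.1 h.2.2.1 ∧ del0 h.2.1 h.2.2.2 := by
    intro h hm
    induction hm with
    | genA x y hxy =>
        have hd : del0 x y := hxy del0 isConA_del0 cen11
        exact ⟨fun _ => rfl, hd, hd⟩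
    | genB c d _ => exact ⟨fun h => h, Iff.rfl, Iff.rfl⟩
    | app a₁ a₂ a₃ a₄ b₁ b₂ b₃ b₄ _ _ iha ihb =>
        obtain ⟨ia, ca1, ca2⟩ := iha
        obtain ⟨ib, cb1, cb2⟩ := ihb
        dsimp only at ia ca1 ca2 ib cb1 cb2 ⊢
        refine ⟨?_, ?_, ?_⟩
        · intro heq
          by_cases h1 : a₁ = AA.o
          · have h2 : a₂ = AA.o := by
              have : tA a₂ b₂ = AA.o := by rw [← heq, h1]; rfl
              exact (tA_eq_o_iff _ _).mp this
            have h3 : a₃ = AA.o := ca1.mp h1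
            have h4 : a₄ = AA.o := ca2.mp h2
            rw [h3, h4]; rfl
          · have h2 : a₂ ≠ AA.o := by
              intro h2
              apply h1
              have : tA a₁ b₁ = AA.o := by rw [heq, h2]; rfl
              exact (tA_eq_o_iff _ _).mp this
            cases a₁ with
            | o => exact absurd rfl h1
            | g u v =>
              cases a₂ with
              | o => exact absurd rfl h2
              | g u' v' =>
                rw [tA_g, tA_g] at heq
                injection heq with heq1 heq2
                rw [ia heq1, ib heq2]
        · simpa only [del0, tA_eq_o_iff] using ca1
        · simpa only [del0, tA_eq_o_iff] using ca2
  intro h₁ h₂ h₃ h₄ hm hd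
  exact (key _ hm).1 hd

lemma lser_step (n : ℕ) (a c d : AA) (ha : a ≠ AA.o) (h : lserA n c d) :
    lserA (n + 1) (AA.g a c) (AA.g a d) := by
  intro δ hcon hcen
  have hsq : MsqA oneA (lserA n) (tA AA.o c, tA AA.o d, tA a c, tA a d) :=
    MsqA.app _ _ _ _ _ _ _ _ (MsqA.genA AA.o a trivial) (MsqA.genB c d h)
  have hres := hcen _ _ _ _ hsq (hcon.1.refl _)
  cases a with
  | o => exact absurd rfl ha
  | g u v => exact hres

def cN : ℕ → AA
  | 0 => AA.o
  | n + 1 => AA.g (AA.g AA.o AA.o) (cN n)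

def dN : ℕ → AA
  | 0 => AA.g AA.o AA.o
  | n + 1 => AA.g (AA.g AA.o AA.o) (dN n)

lemma lser_cd (n : ℕ) : lserA n (cN n) (dN n) := by
  induction n with
  | zero => trivial
  | succ n ih => exact lser_step n _ _ _ (fun h => AA.noConfusion h) ih

lemma cd_ne (n : ℕ) : cN n ≠ dN n := by
  induction n with
  | zero => exact fun h => AA.noConfusion h
  | succ n ih =>
      intro h
      injection h with h1 h2
      exact ih h2

/-- The algebra `⟨A; t⟩` is right nilpotent (`[[1,1],1] = 0`) but not left
nilpotent (`[1]'ₙ ≠ 0` for all `n`). -/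
theorem stmt17 :
    (∀ a b : AA, commA (commA oneA oneA) oneA a b → a = b) ∧
    (∀ n : ℕ, ¬ (∀ a b : AA, lserA n a b → a = b)) := by
  constructor
  · intro a b h
    exact h Eq ⟨⟨fun _ => rfl, Eq.symm, Eq.trans⟩,
      fun a b c d hab hcd => by rw [hab, hcd]⟩ cenEq
  · intro n h
    exact cd_ne n (h _ _ (lser_cd n))
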